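/- arXiv:1609.04884 — 11 statements merged into one kernel-verified Lean document; each statement's English description precedes it below -/
import Mathlib

section
/- Let T be a bounded operator on a complex Hilbert space H with closed range, and write T = [[A, B],[0,0]] with respect to the decomposition H = R(T) ⊕ N(T*), where A : R(T) → R(T) and B : N(T*) → R(T). Then R(T) ∩ R(T*) = {0} if and only if the closure of R(B) equals R(T). -/
/-!
Let `K = R(T)` and `N = N(T*) = Kᗮ`. For `y ∈ K` and `n ∈ N` we have `⟪B n, y⟫ = ⟪n, T* y⟫`, so the
orthogonal complement of `R(B)` in `K` is `{y ∈ K | T* y ∈ Nᗮ = K}`. Since `T*` vanishes on `Kᗮ`, it is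
injective on `K` and `R(T*) = T*(K)`; hence `K ∩ R(T*)` is the injective image under `T*` of that
complement, and one is zero exactly when the other is.
-/

open ContinuousLinearMap

variable {H : Type*} [NormedAddCommGroup H] [InnerProductSpace ℂ H] [CompleteSpace H]

noncomputable def opB (T : H →L[ℂ] H) (K N : Submodule ℂ H) [CompleteSpace K] :
    N →L[ℂ] K :=
  (K.orthogonalProjectionOnto) ∘L (T ∘L N.subtypeL)

theorem Submodule.inf_range_eq_bot_iff_of_ker_eq_orthogonal {𝕜 E : Type*} [RCLike 𝕜]
    [NormedAddCommGroup E] [InnerProductSpace 𝕜 E] {S : E →ₗ[𝕜] E} {K : Submodule 𝕜 E}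
    [K.HasOrthogonalProjection] (hS : LinearMap.ker S = Kᗮ) :
    K ⊓ LinearMap.range S = ⊥ ↔ ∀ y ∈ K, S y ∈ K → y = 0 := by
  have hinj {y : E} (hy : y ∈ K) (hSy : S y = 0) : y = 0 :=
    K.inf_orthogonal_eq_bot.le ⟨hy, hS ▸ hSy⟩
  rw [Submodule.eq_bot_iff]
  constructor
  · intro h y hy hSy
    exact hinj hy (h (S y) ⟨hSy, y, rfl⟩)
  · rintro h _ ⟨hx, z, rfl⟩
    obtain ⟨y, hy, w, hw, rfl⟩ := K.exists_add_mem_mem_orthogonal z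
    have hSw : S w = 0 := by rwa [← LinearMap.mem_ker, hS]
    rw [map_add, hSw, add_zero] at hx ⊢
    rw [h y hy hx, map_zero]

theorem mem_orthogonal_range_opB_iff (T : H →L[ℂ] H) (K N : Submodule ℂ H) [CompleteSpace K]
    (y : K) : y ∈ (LinearMap.range (opB T K N).toLinearMap)ᗮ ↔ adjoint T y ∈ Nᗮ := by
  have hinner (n : N) : inner ℂ (opB T K N n) y = inner ℂ (n : H) (adjoint T y) := by
    simp only [opB, comp_apply, Submodule.subtypeL_apply,
      Submodule.inner_orthogonalProjectionOnto_eq_of_mem_right, adjoint_inner_right]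
  rw [Submodule.mem_orthogonal, Submodule.mem_orthogonal]
  constructor
  · intro h n hn
    rw [← hinner ⟨n, hn⟩]
    exact h _ ⟨_, rfl⟩
  · rintro h _ ⟨n, rfl⟩
    rw [coe_coe, hinner]
    exact h n n.2

theorem stmt0 (T : H →L[ℂ] H) (hT : IsClosed (LinearMap.range T.toLinearMap : Set H)) :
    haveI : CompleteSpace (LinearMap.range T.toLinearMap) := by exact hT.completeSpace_coe
    (LinearMap.range T.toLinearMap ⊓ LinearMap.range (adjoint T).toLinearMap = ⊥ ↔
      (LinearMap.range (opB T (LinearMap.range T.toLinearMap) (LinearMap.ker (adjoint T).toLinearMap)).toLinearMap).topologicalClosure = ⊤) := by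
  have : CompleteSpace (LinearMap.range T.toLinearMap) := hT.completeSpace_coe
  have hker := (orthogonal_range T).symm
  have hker_orthogonal :
      (LinearMap.ker (adjoint T).toLinearMap)ᗮ = LinearMap.range T.toLinearMap := by
    rw [hker, Submodule.orthogonal_orthogonal]
  rw [Submodule.inf_range_eq_bot_iff_of_ker_eq_orthogonal hker,
    Submodule.topologicalClosure_eq_top_iff, Submodule.eq_bot_iff]
  simp only [mem_orthogonal_range_opB_iff, hker_orthogonal, Subtype.forall, Submodule.mk_eq_zero,
    coe_coe]
end

section
/- Let T be a bounded operator on a complex Hilbert space H with closed range, and write T = [[A, B],[0,0]] with respect to H = R(T) ⊕ N(T*). Then R(T) + R(T*) = H if and only if R(B*) = N(T*). -/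
/-!
With `N = N(T*) = R(T)ᗮ`, the adjoint of `B = P_{R(T)} T|_N` is `B* = P_N T*|_{R(T)}`. Since `T*`
vanishes on `N` and `H = R(T) ⊕ N`, `T*(R(T)) = R(T*)`, so `R(B*) = P_N(R(T*))`. Finally, as
`ker P_N = R(T)`, a subspace `S` satisfies `R(T) + S = H` exactly when `P_N(S) = N`.
-/

open ContinuousLinearMap

variable {H : Type*} [NormedAddCommGroup H] [InnerProductSpace ℂ H] [CompleteSpace H]

section

variable {𝕜 E F : Type*} [RCLike 𝕜] [NormedAddCommGroup E] [InnerProductSpace 𝕜 E]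
  [NormedAddCommGroup F] [InnerProductSpace 𝕜 F]

theorem Submodule.orthogonal_sup_eq_top_iff_map_orthogonalProjectionOnto_eq_top
    (N S : Submodule 𝕜 E) [N.HasOrthogonalProjection] :
    Nᗮ ⊔ S = ⊤ ↔ S.map (N.orthogonalProjectionOnto : E →ₗ[𝕜] N) = ⊤ := by
  have hsurj : LinearMap.range (N.orthogonalProjectionOnto : E →ₗ[𝕜] N) = ⊤ :=
    LinearMap.range_eq_top.mpr fun y ↦ ⟨y, by simp⟩
  rw [LinearMap.map_eq_top_iff hsurj, Submodule.ker_orthogonalProjectionOnto, sup_comm]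

theorem ContinuousLinearMap.map_adjoint_range_eq_range_adjoint
    [CompleteSpace E] [CompleteSpace F]
    (T : E →L[𝕜] F) [(LinearMap.range (T : E →ₗ[𝕜] F)).HasOrthogonalProjection] :
    (LinearMap.range (T : E →ₗ[𝕜] F)).map (adjoint T : F →ₗ[𝕜] E) =
      LinearMap.range (adjoint T : F →ₗ[𝕜] E) := by
  have hker : ((LinearMap.range (T : E →ₗ[𝕜] F))ᗮ).map (adjoint T : F →ₗ[𝕜] E) = ⊥ :=
    LinearMap.le_ker_iff_map.mp T.orthogonal_range.le
  rw [LinearMap.range_eq_map (adjoint T : F →ₗ[𝕜] E),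
    ← Submodule.sup_orthogonal_of_hasOrthogonalProjection (K := LinearMap.range (T : E →ₗ[𝕜] F)),
    Submodule.map_sup, hker, sup_bot_eq]

end

theorem range_adjoint_opB (T : H →L[ℂ] H) (K N : Submodule ℂ H) [CompleteSpace K]
    [CompleteSpace N] :
    LinearMap.range (adjoint (opB T K N)).toLinearMap =
      (K.map (adjoint T : H →ₗ[ℂ] H)).map (N.orthogonalProjectionOnto : H →ₗ[ℂ] N) := by
  rw [opB, adjoint_comp, adjoint_comp, Submodule.adjoint_subtypeL,
      Submodule.adjoint_orthogonalProjectionOnto]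
  simp [LinearMap.range_comp, Submodule.range_subtype, Submodule.map_comp]

theorem stmt1 (T : H →L[ℂ] H) (hT : IsClosed (LinearMap.range (T : H →ₗ[ℂ] H) : Set H)) :
    haveI : CompleteSpace (LinearMap.range (T : H →ₗ[ℂ] H)) := hT.completeSpace_coe
    haveI : CompleteSpace (LinearMap.ker (adjoint T : H →ₗ[ℂ] H)) :=
      (ContinuousLinearMap.isClosed_ker (adjoint T)).completeSpace_coe
    (LinearMap.range (T : H →ₗ[ℂ] H) ⊔ LinearMap.range (adjoint T : H →ₗ[ℂ] H) = ⊤ ↔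
      LinearMap.range (adjoint (opB T (LinearMap.range (T : H →ₗ[ℂ] H))
        (LinearMap.ker (adjoint T : H →ₗ[ℂ] H)))).toLinearMap = ⊤) := by
  have : CompleteSpace (LinearMap.range (T : H →ₗ[ℂ] H)) := hT.completeSpace_coe
  have hker_perp :
      (LinearMap.ker (adjoint T : H →ₗ[ℂ] H))ᗮ = LinearMap.range (T : H →ₗ[ℂ] H) := by
    rw [← T.orthogonal_range, Submodule.orthogonal_orthogonal]
  rw [range_adjoint_opB, T.map_adjoint_range_eq_range_adjoint, ← hker_perp]
  exact Submodule.orthogonal_sup_eq_top_iff_map_orthogonalProjectionOnto_eq_top _ _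
end

section
/- Let T be a bounded operator on a complex Hilbert space H with closed range, and write T = [[A, B],[0,0]] with respect to H = R(T) ⊕ N(T*). Then R(T) ⊕ R(T*) = H (a direct, not necessarily orthogonal, sum with trivial intersection) if and only if B is invertible (a bounded bijection from N(T*) onto R(T)). -/
/-!
On `N(T*) = R(T)ᗮ` the operator `B` is just `T`, so `B` is bijective exactly when `N(T*)` and
`N(T) = R(T*)ᗮ` are algebraic complements. Since `R(T)` is closed, so is `R(T*)`: the open mapping
theorem gives `‖y‖ ≤ C ‖T* y‖` on `R(T)`, and `T*` maps `R(T)` onto `R(T*)`. Finally, two closed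
subspaces are complements iff their orthogonal complements are, because the adjoint of the bounded
projection onto `U` along `W` is the projection onto `Wᗮ` along `Uᗮ`.
-/

open ContinuousLinearMap

variable {H : Type*} [NormedAddCommGroup H] [InnerProductSpace ℂ H] [CompleteSpace H]

open scoped InnerProductSpace

namespace ContinuousLinearMap

variable {𝕜 E F : Type*} [RCLike 𝕜] [NormedAddCommGroup E] [InnerProductSpace 𝕜 E]
  [NormedAddCommGroup F] [InnerProductSpace 𝕜 F] [CompleteSpace E] [CompleteSpace F]

theorem exists_norm_le_mul_norm_adjoint_of_isClosed_range {T : E →L[𝕜] F}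
    (hT : IsClosed (T.range : Set F)) : ∃ C, ∀ y ∈ T.range, ‖y‖ ≤ C * ‖adjoint T y‖ := by
  have := hT.completeSpace_coe
  obtain ⟨C, -, hC⟩ := T.rangeRestrict.exists_preimage_norm_le T.surjective_rangeRestrict
  refine ⟨C, fun y hy => ?_⟩
  obtain ⟨x, hTx, hx⟩ := hC ⟨y, hy⟩
  replace hTx : T x = y := congrArg Subtype.val hTx
  rcases eq_or_ne y 0 with rfl | hy0
  · simp
  refine le_of_mul_le_mul_left ?_ (norm_pos_iff.2 hy0)
  calc ‖y‖ * ‖y‖ = ‖⟪x, adjoint T y⟫_𝕜‖ := by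
        simp [adjoint_inner_right, hTx, inner_self_eq_norm_sq_to_K, sq]
    _ ≤ ‖x‖ * ‖adjoint T y‖ := norm_inner_le_norm _ _
    _ ≤ C * ‖y‖ * ‖adjoint T y‖ := by gcongr; exact hx
    _ = ‖y‖ * (C * ‖adjoint T y‖) := by ring

theorem range_adjoint_eq_map_range {T : E →L[𝕜] F} (hT : IsClosed (T.range : Set F)) :
    (adjoint T).range = T.range.map (adjoint T : F →ₗ[𝕜] E) := by
  have := hT.completeSpace_coe
  refine le_antisymm ?_ LinearMap.map_le_range
  rw [LinearMap.range_eq_map, LinearMap.map_le_map_iff, ← orthogonal_range,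
    T.range.sup_orthogonal_of_hasOrthogonalProjection]

theorem isClosed_range_adjoint {T : E →L[𝕜] F} (hT : IsClosed (T.range : Set F)) :
    IsClosed ((adjoint T).range : Set E) := by
  obtain ⟨C, hC⟩ := exists_norm_le_mul_norm_adjoint_of_isClosed_range hT
  have hanti : AntilipschitzWith C.toNNReal ((adjoint T).domRestrict T.range) :=
    antilipschitz_of_bound _ fun y =>
      (hC y y.2).trans (mul_le_mul_of_nonneg_right C.le_coe_toNNReal (norm_nonneg _))
  have hrange : ((adjoint T).domRestrict T.range).range = (adjoint T).range := by
    simpa using (range_adjoint_eq_map_range hT).symm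
  rw [← hrange]
  exact hanti.isClosed_range ((adjoint T).domRestrict T.range).uniformContinuous

end ContinuousLinearMap

namespace Submodule

variable {𝕜 E : Type*} [RCLike 𝕜] [NormedAddCommGroup E] [InnerProductSpace 𝕜 E] [CompleteSpace E]

theorem IsTopCompl.isCompl_orthogonal {p q : Submodule 𝕜 E} (h : IsTopCompl p q) :
    IsCompl pᗮ qᗮ := by
  refine ⟨disjoint_iff.2 ?_, codisjoint_iff.2 ?_⟩
  · rw [inf_orthogonal, h.isCompl.sup_eq_top, top_orthogonal_eq_bot]
  set P := p.projectionL q h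
  refine eq_top_iff'.2 fun x => ?_
  have hq : adjoint P x ∈ qᗮ := (mem_orthogonal' _ _).2 fun y hy => by
    rw [adjoint_inner_left, projectionL_apply_right h ⟨y, hy⟩, inner_zero_right]
  have hp : x - adjoint P x ∈ pᗮ := (mem_orthogonal' _ _).2 fun y hy => by
    rw [inner_sub_left, adjoint_inner_left, projectionL_apply_left h ⟨y, hy⟩, sub_self]
  simpa using add_mem_sup hp hq

theorem isCompl_orthogonal_iff {p q : Submodule 𝕜 E} (hp : IsClosed (p : Set E))
    (hq : IsClosed (q : Set E)) : IsCompl pᗮ qᗮ ↔ IsCompl p q := by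
  have := hp.completeSpace_coe
  have := hq.completeSpace_coe
  refine ⟨fun h => ?_, fun h => (IsCompl.isTopCompl_of_isClosed h hp hq).isCompl_orthogonal⟩
  have h' := IsCompl.isTopCompl_of_isClosed h p.isClosed_orthogonal q.isClosed_orthogonal
  simpa only [orthogonal_orthogonal] using h'.isCompl_orthogonal

end Submodule

theorem LinearMap.bijective_domRestrict_rangeRestrict_iff {R M M₂ : Type*} [Ring R]
    [AddCommGroup M] [AddCommGroup M₂] [Module R M] [Module R M₂] (f : M →ₗ[R] M₂)
    (p : Submodule R M) :
    Function.Bijective (f.rangeRestrict.domRestrict p) ↔ IsCompl p f.ker := by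
  rw [Function.Bijective, injective_domRestrict_iff, ker_rangeRestrict, ← range_eq_top,
    range_domRestrict, map_eq_top_iff f.range_rangeRestrict, ker_rangeRestrict,
    isCompl_iff, codisjoint_iff]

section opB

variable {X : Type*} [NormedAddCommGroup X] [InnerProductSpace ℂ X] (T : X →L[ℂ] X)
  (N : Submodule ℂ X) [CompleteSpace (LinearMap.range (T : X →ₗ[ℂ] X))]

theorem coe_opB_range :
    ⇑(opB T (LinearMap.range (T : X →ₗ[ℂ] X)) N) =
      (T : X →ₗ[ℂ] X).rangeRestrict.domRestrict N :=
  funext fun n => Submodule.orthogonalProjectionOnto_mem_subspace_eq_self ⟨T n, _⟩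

theorem bijective_opB_range_iff :
    Function.Bijective (opB T (LinearMap.range (T : X →ₗ[ℂ] X)) N) ↔
      IsCompl N (LinearMap.ker (T : X →ₗ[ℂ] X)) := by
  rw [coe_opB_range, LinearMap.bijective_domRestrict_rangeRestrict_iff]

end opB

theorem stmt2 (T : H →L[ℂ] H) (hT : IsClosed (LinearMap.range (T : H →ₗ[ℂ] H) : Set H)) :
    haveI : CompleteSpace (LinearMap.range (T : H →ₗ[ℂ] H)) := by exact hT.completeSpace_coe
    (LinearMap.range (T : H →ₗ[ℂ] H) ⊓ LinearMap.range (adjoint T : H →ₗ[ℂ] H) = ⊥ ∧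
        LinearMap.range (T : H →ₗ[ℂ] H) ⊔ LinearMap.range (adjoint T : H →ₗ[ℂ] H) = ⊤ ↔
      Function.Bijective (opB T (LinearMap.range (T : H →ₗ[ℂ] H)) (LinearMap.ker (adjoint T : H →ₗ[ℂ] H)))) := by
  have hker : LinearMap.ker (T : H →ₗ[ℂ] H) = (LinearMap.range (adjoint T : H →ₗ[ℂ] H))ᗮ := by
    rw [orthogonal_range, adjoint_adjoint]
  rw [bijective_opB_range_iff, ← orthogonal_range, hker,
    Submodule.isCompl_orthogonal_iff hT (isClosed_range_adjoint hT), isCompl_iff, disjoint_iff,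
    codisjoint_iff]
end

section
/- Let T be a bounded operator on a complex Hilbert space H with closed range. Then R(TT† − T†T) is closed if and only if R(T) + R(T*) is closed, where T† is the Moore–Penrose inverse of T. -/
/-!
With `P = T T†` and `Q = T† T`, the orthogonal projections onto `M = R(T)` and `N = R(T*)`,
the question is when `R(P - Q)` is closed. Since `P - Q` is self-adjoint with kernel
`(M ∩ N) ⊕ (M + N)ᗮ`, the closure of its range is `(M ∩ N)ᗮ ∩ closure (M + N)`.

If `R(P - Q)` is closed, then `closure (M + N) = (M ∩ N) + R(P - Q) ⊆ M + N`.

If `M + N` is closed, then so is `K + N`, where `K = M ⊖ (M ∩ N)` meets `N` trivially; by the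
open mapping theorem the projection of `K ⊕ N` onto `K` is bounded. This bounds `‖P x‖` and
`‖Q x‖` by `‖(P - Q) x‖` for `x ⊥ M ∩ N`, and `‖x‖` by `‖P x‖ + ‖Q x‖` for `x ∈ M + N`, so
`P - Q` is bounded below on the orthogonal complement of its kernel.
-/

open ContinuousLinearMap

open scoped NNReal

section

variable {𝕜 E F : Type*} [RCLike 𝕜] [NormedAddCommGroup E] [InnerProductSpace 𝕜 E]
  [NormedAddCommGroup F] [InnerProductSpace 𝕜 F]

namespace Submodule

theorem isClosed_of_hasOrthogonalProjection (K : Submodule 𝕜 E) [K.HasOrthogonalProjection] :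
    IsClosed (K : Set E) :=
  K.orthogonal_orthogonal ▸ Kᗮ.isClosed_orthogonal

theorem disjoint_inf_orthogonal_inf (M N : Submodule 𝕜 E) : Disjoint (M ⊓ (M ⊓ N)ᗮ) N :=
  disjoint_def.mpr fun x hx hxN ↦ inner_self_eq_zero.mp (hx.2 x ⟨hx.1, hxN⟩)

theorem inf_orthogonal_inf_sup (M N : Submodule 𝕜 E) [(M ⊓ N).HasOrthogonalProjection] :
    M ⊓ (M ⊓ N)ᗮ ⊔ N = M ⊔ N := by
  refine le_antisymm (sup_le_sup_right inf_le_left N) ?_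
  conv_lhs => rw [← sup_orthogonal_inf_of_hasOrthogonalProjection (inf_le_left : M ⊓ N ≤ M)]
  rw [inf_comm (M ⊓ N)ᗮ M]
  exact sup_le (sup_le (inf_le_right.trans le_sup_right) le_sup_left) le_sup_right

variable (M N : Submodule 𝕜 E) [M.HasOrthogonalProjection] [N.HasOrthogonalProjection]

theorem ker_starProjection_sub_starProjection :
    (M.starProjection - N.starProjection).ker = M ⊓ N ⊔ (M ⊔ N)ᗮ := by
  apply le_antisymm
  · intro x hx
    have hPQ : M.starProjection x = N.starProjection x := sub_eq_zero.mp hx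
    have hL : M.starProjection x ∈ M ⊓ N :=
      ⟨M.starProjection_apply_mem x, hPQ ▸ N.starProjection_apply_mem x⟩
    have hperp : x - M.starProjection x ∈ (M ⊔ N)ᗮ := by
      rw [← inf_orthogonal]
      refine ⟨M.sub_starProjection_mem_orthogonal x, ?_⟩
      rw [hPQ]
      exact N.sub_starProjection_mem_orthogonal x
    simpa using add_mem (mem_sup_left hL) (mem_sup_right hperp)
  · refine sup_le (fun x hx ↦ ?_) (fun x hx ↦ ?_)
    · change M.starProjection x - N.starProjection x = 0
      rw [starProjection_eq_self_iff.mpr hx.1, starProjection_eq_self_iff.mpr hx.2, sub_self]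
    · rw [← inf_orthogonal] at hx
      change M.starProjection x - N.starProjection x = 0
      rw [(starProjection_apply_eq_zero_iff _).mpr hx.1,
        (starProjection_apply_eq_zero_iff _).mpr hx.2, sub_self]

theorem range_starProjection_sub_starProjection_le :
    (M.starProjection - N.starProjection).range ≤ M ⊔ N := by
  rintro _ ⟨x, rfl⟩
  exact sub_mem (mem_sup_left (M.starProjection_apply_mem x))
    (mem_sup_right (N.starProjection_apply_mem x))

end Submodule

namespace ContinuousLinearMap

variable {T : E →L[𝕜] F} {S : F →L[𝕜] E}

theorem range_comp_eq_range_of_comp_comp_eq (h : T ∘L S ∘L T = T) : (T ∘L S).range = T.range :=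
  le_antisymm (LinearMap.range_comp_le_range _ _) fun _ ⟨x, hx⟩ ↦ ⟨T x, hx ▸ congr($h x)⟩

theorem isIdempotentElem_comp_of_comp_comp_eq (h : T ∘L S ∘L T = T) :
    IsIdempotentElem (T ∘L S) := by
  rw [IsIdempotentElem, mul_def, comp_assoc, ← comp_assoc S, ← comp_assoc T, h]

theorem isIdempotentElem_comp_of_comp_comp_eq' (h : T ∘L S ∘L T = T) :
    IsIdempotentElem (S ∘L T) := by
  rw [IsIdempotentElem, mul_def, comp_assoc, h]

end ContinuousLinearMap

variable [CompleteSpace E]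

instance Submodule.HasOrthogonalProjection.inf (M N : Submodule 𝕜 E) [M.HasOrthogonalProjection]
    [N.HasOrthogonalProjection] : (M ⊓ N).HasOrthogonalProjection :=
  have : CompleteSpace ↥(M ⊓ N) :=
    (M.isClosed_of_hasOrthogonalProjection.inter N.isClosed_of_hasOrthogonalProjection).completeSpace_coe
  inferInstance

theorem ContinuousLinearMap.isClosed_range_of_norm_le_of_mem_orthogonal_ker
    {G : Type*} [NormedAddCommGroup G] [NormedSpace 𝕜 G] (T : E →L[𝕜] G) (C : ℝ≥0)
    (h : ∀ x ∈ T.kerᗮ, ‖x‖ ≤ C * ‖T x‖) : IsClosed (T.range : Set G) := by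
  have : CompleteSpace T.ker := T.isClosed_ker.completeSpace_coe
  have : CompleteSpace T.kerᗮ := (Submodule.isClosed_orthogonal _).completeSpace_coe
  let f : T.kerᗮ →L[𝕜] G := T ∘L T.kerᗮ.subtypeL
  have hf : AntilipschitzWith C f := f.antilipschitz_of_bound fun x ↦ h x x.2
  have hrange : (T.range : Set G) = Set.range f := by
    refine subset_antisymm ?_ fun _ ⟨x, hx⟩ ↦ ⟨x, hx⟩
    rintro _ ⟨x, rfl⟩
    refine ⟨⟨x - T.ker.starProjection x, T.ker.sub_starProjection_mem_orthogonal x⟩, ?_⟩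
    have hker : T (T.ker.starProjection x) = 0 := T.ker.starProjection_apply_mem x
    simp [f, hker]
  exact hrange ▸ hf.isClosed_range f.uniformContinuous

namespace Submodule

theorem exists_norm_le_mul_norm_add_of_isClosed_sup {K N : Submodule 𝕜 E}
    (hK : IsClosed (K : Set E)) [N.HasOrthogonalProjection] (hKN : Disjoint K N)
    (hsup : IsClosed ((K ⊔ N : Submodule 𝕜 E) : Set E)) :
    ∃ C : ℝ≥0, ∀ u ∈ K, ∀ v ∈ N, ‖u‖ ≤ C * ‖u + v‖ := by
  have : CompleteSpace K := hK.completeSpace_coe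
  -- Open mapping: `Nᗮ.starProjection` is bounded below on `K`, being injective with closed range.
  let f : K →L[𝕜] E := Nᗮ.starProjection ∘L K.subtypeL
  have hfN : ∀ v ∈ N, Nᗮ.starProjection v = 0 := fun v ↦ starProjection_orthogonal_apply_eq_zero
  have hinj : Function.Injective f := by
    refine (injective_iff_map_eq_zero f).mpr fun u hu ↦ ?_
    have huN : (u : E) ∈ N := N.orthogonal_orthogonal ▸ (starProjection_apply_eq_zero_iff _).mp hu
    exact Subtype.ext (disjoint_def.mp hKN u u.2 huN)
  have hrange : Set.range f = ((K ⊔ N) ⊓ Nᗮ : Submodule 𝕜 E) := by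
    ext y
    constructor
    · rintro ⟨u, rfl⟩
      refine ⟨?_, Nᗮ.starProjection_apply_mem u⟩
      change Nᗮ.starProjection u ∈ K ⊔ N
      rw [starProjection_orthogonal_val]
      exact sub_mem (mem_sup_left u.2) (mem_sup_right (N.starProjection_apply_mem u))
    · rintro ⟨hy, hyN⟩
      obtain ⟨u, hu, v, hv, rfl⟩ := mem_sup.mp hy
      refine ⟨⟨u, hu⟩, ?_⟩
      change Nᗮ.starProjection u = u + v
      rw [← starProjection_eq_self_iff.mpr hyN, map_add, hfN v hv, add_zero]
  obtain ⟨C, hC⟩ := f.antilipschitz_of_injective_of_isClosed_range hinj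
    (hrange ▸ hsup.inter (isClosed_orthogonal _))
  refine ⟨C, fun u hu v hv ↦ ?_⟩
  calc ‖u‖ = ‖(⟨u, hu⟩ : K)‖ := rfl
    _ ≤ C * ‖Nᗮ.starProjection (u + v)‖ := by
      rw [map_add, hfN v hv, add_zero]
      exact f.bound_of_antilipschitz hC _
    _ ≤ C * ‖u + v‖ := by gcongr; exact Nᗮ.norm_starProjection_apply_le _

variable (M N : Submodule 𝕜 E) [M.HasOrthogonalProjection] [N.HasOrthogonalProjection]

theorem orthogonal_ker_starProjection_sub_starProjection :
    (M.starProjection - N.starProjection).kerᗮ = (M ⊓ N)ᗮ ⊓ (M ⊔ N).topologicalClosure := by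
  rw [ker_starProjection_sub_starProjection, ← inf_orthogonal, orthogonal_orthogonal_eq_closure]

theorem isClosed_sup_of_isClosed_range_starProjection_sub_starProjection
    (h : IsClosed ((M.starProjection - N.starProjection).range : Set E)) :
    IsClosed ((M ⊔ N : Submodule 𝕜 E) : Set E) := by
  set D := M.starProjection - N.starProjection
  have hD : adjoint D = D := by
    simp [D, map_sub, (isSelfAdjoint_starProjection M).adjoint_eq,
      (isSelfAdjoint_starProjection N).adjoint_eq]
  have hclosure : (M ⊔ N).topologicalClosure = M ⊓ N ⊔ D.range := by
    rw [← h.submodule_topologicalClosure_eq, ← hD, ← orthogonal_ker,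
      orthogonal_ker_starProjection_sub_starProjection,
      sup_orthogonal_inf_of_hasOrthogonalProjection]
    exact inf_le_left.trans (le_sup_left.trans (M ⊔ N).le_topologicalClosure)
  refine isClosed_of_closure_subset fun x hx ↦ ?_
  rw [← topologicalClosure_coe, hclosure] at hx
  exact sup_le (inf_le_left.trans le_sup_left) (range_starProjection_sub_starProjection_le M N) hx

theorem exists_norm_le_mul_norm_add_of_mem_inf_orthogonal_inf
    (h : IsClosed ((M ⊔ N : Submodule 𝕜 E) : Set E)) :
    ∃ C : ℝ≥0, ∀ u ∈ M ⊓ (M ⊓ N)ᗮ, ∀ v ∈ N, ‖u‖ ≤ C * ‖u + v‖ :=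
  exists_norm_le_mul_norm_add_of_isClosed_sup
    (M.isClosed_of_hasOrthogonalProjection.inter (isClosed_orthogonal _))
    (disjoint_inf_orthogonal_inf M N) (by rwa [inf_orthogonal_inf_sup])

theorem exists_norm_starProjection_le_of_isClosed_sup
    (h : IsClosed ((M ⊔ N : Submodule 𝕜 E) : Set E)) :
    ∃ C : ℝ≥0, ∀ x ∈ (M ⊓ N)ᗮ,
      ‖M.starProjection x‖ ≤ C * ‖M.starProjection x - N.starProjection x‖ := by
  obtain ⟨C, hC⟩ := exists_norm_le_mul_norm_add_of_mem_inf_orthogonal_inf M N h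
  refine ⟨C, fun x hx ↦ ?_⟩
  have hPx : M.starProjection x ∈ M ⊓ (M ⊓ N)ᗮ := by
    refine ⟨M.starProjection_apply_mem x, fun l hl ↦ ?_⟩
    rw [← inner_starProjection_left_eq_right, starProjection_eq_self_iff.mpr hl.1]
    exact hx l hl
  calc ‖M.starProjection x‖
      ≤ C * ‖M.starProjection x + -N.starProjection (M.starProjection x)‖ :=
        hC _ hPx _ (neg_mem (N.starProjection_apply_mem _))
    _ = C * ‖Nᗮ.starProjection (M.starProjection x - N.starProjection x)‖ := by
      rw [map_sub, starProjection_orthogonal_apply_eq_zero (N.starProjection_apply_mem x),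
        sub_zero, starProjection_orthogonal_val, sub_eq_add_neg]
    _ ≤ C * ‖M.starProjection x - N.starProjection x‖ := by
      gcongr; exact Nᗮ.norm_starProjection_apply_le _

theorem exists_norm_le_of_mem_sup_of_isClosed_sup
    (h : IsClosed ((M ⊔ N : Submodule 𝕜 E) : Set E)) :
    ∃ C : ℝ≥0, ∀ x ∈ M ⊔ N, ‖x‖ ≤ C * (‖M.starProjection x‖ + ‖N.starProjection x‖) := by
  obtain ⟨C, hC⟩ := exists_norm_le_mul_norm_add_of_mem_inf_orthogonal_inf M N h
  refine ⟨C + 1, fun x hx ↦ ?_⟩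
  rw [← inf_orthogonal_inf_sup] at hx
  obtain ⟨u, hu, v, hv, rfl⟩ := mem_sup.mp hx
  have hu' : ‖u‖ ≤ C * ‖u + v‖ := hC u hu v hv
  have hv' : ‖v‖ ≤ (C + 1) * ‖u + v‖ :=
    calc ‖v‖ = ‖u + v - u‖ := by rw [add_sub_cancel_left]
      _ ≤ ‖u + v‖ + ‖u‖ := norm_sub_le _ _
      _ ≤ (C + 1) * ‖u + v‖ := by linarith
  have hsq : ‖u + v‖ ^ 2 ≤
      ‖M.starProjection (u + v)‖ * ‖u‖ + ‖N.starProjection (u + v)‖ * ‖v‖ := by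
    rw [← inner_self_eq_norm_sq (𝕜 := 𝕜)]
    nth_rewrite 2 [← starProjection_eq_self_iff.mpr hu.1, ← starProjection_eq_self_iff.mpr hv]
    rw [inner_add_right, ← inner_starProjection_left_eq_right,
      ← inner_starProjection_left_eq_right, map_add]
    exact add_le_add (re_inner_le_norm _ _) (re_inner_le_norm _ _)
  have hP := norm_nonneg (M.starProjection (u + v))
  have hQ := norm_nonneg (N.starProjection (u + v))
  have hx := norm_nonneg (u + v)
  have hbound : ‖u + v‖ * ‖u + v‖ ≤
      (C + 1) * (‖M.starProjection (u + v)‖ + ‖N.starProjection (u + v)‖) * ‖u + v‖ := by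
    nlinarith [mul_le_mul_of_nonneg_left hu' hP, mul_le_mul_of_nonneg_left hv' hQ,
      mul_nonneg hP hx]
  push_cast
  rcases hx.eq_or_lt with h0 | h0
  · rw [← h0]; positivity
  · exact le_of_mul_le_mul_right hbound h0

theorem isClosed_range_starProjection_sub_starProjection_of_isClosed_sup
    (h : IsClosed ((M ⊔ N : Submodule 𝕜 E) : Set E)) :
    IsClosed ((M.starProjection - N.starProjection).range : Set E) := by
  obtain ⟨C, hC⟩ := exists_norm_le_of_mem_sup_of_isClosed_sup M N h
  obtain ⟨CM, hCM⟩ := exists_norm_starProjection_le_of_isClosed_sup M N h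
  obtain ⟨CN, hCN⟩ := exists_norm_starProjection_le_of_isClosed_sup N M (sup_comm M N ▸ h)
  refine isClosed_range_of_norm_le_of_mem_orthogonal_ker _ (C * (CM + CN)) fun x hx ↦ ?_
  rw [orthogonal_ker_starProjection_sub_starProjection, h.submodule_topologicalClosure_eq] at hx
  have hPx := hCM x hx.1
  have hQx := hCN x (inf_comm M N ▸ hx.1)
  rw [norm_sub_rev] at hQx
  calc ‖x‖ ≤ C * (‖M.starProjection x‖ + ‖N.starProjection x‖) := hC x hx.2
    _ ≤ C * (CM * ‖M.starProjection x - N.starProjection x‖ +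
        CN * ‖M.starProjection x - N.starProjection x‖) := by gcongr
    _ = ↑(C * (CM + CN)) * ‖(M.starProjection - N.starProjection) x‖ := by
      push_cast [Pi.sub_apply]; ring

theorem isClosed_range_starProjection_sub_starProjection_iff :
    IsClosed ((M.starProjection - N.starProjection).range : Set E) ↔
      IsClosed ((M ⊔ N : Submodule 𝕜 E) : Set E) :=
  ⟨isClosed_sup_of_isClosed_range_starProjection_sub_starProjection M N,
    isClosed_range_starProjection_sub_starProjection_of_isClosed_sup M N⟩

end Submodule

variable [CompleteSpace F]

theorem ContinuousLinearMap.range_comp_eq_range_adjoint_of_comp_comp_eq {T : E →L[𝕜] F}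
    {S : F →L[𝕜] E} (h : T ∘L S ∘L T = T) (hST : IsSelfAdjoint (S ∘L T)) :
    (S ∘L T).range = (adjoint T).range := by
  rw [← hST.adjoint_eq, adjoint_comp]
  exact range_comp_eq_range_of_comp_comp_eq (by rw [← adjoint_comp, ← adjoint_comp, comp_assoc, h])

end

variable {H : Type*} [NormedAddCommGroup H] [InnerProductSpace ℂ H] [CompleteSpace H]

theorem stmt4_general (T Td : H →L[ℂ] H)
    (h1 : T ∘L Td ∘L T = T)
    (h3 : IsSelfAdjoint (T ∘L Td)) (h4 : IsSelfAdjoint (Td ∘L T)) :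
    IsClosed (LinearMap.range ((T ∘L Td - Td ∘L T : H →L[ℂ] H) : H →ₗ[ℂ] H) : Set H) ↔
      IsClosed ((LinearMap.range (T : H →ₗ[ℂ] H) ⊔ LinearMap.range ((adjoint T : H →L[ℂ] H) : H →ₗ[ℂ] H) : Submodule ℂ H) : Set H) := by
  obtain ⟨_, hP⟩ := isStarProjection_iff_eq_starProjection_range.mp
    ⟨isIdempotentElem_comp_of_comp_comp_eq h1, h3⟩
  obtain ⟨_, hQ⟩ := isStarProjection_iff_eq_starProjection_range.mp
    ⟨isIdempotentElem_comp_of_comp_comp_eq' h1, h4⟩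
  have key := Submodule.isClosed_range_starProjection_sub_starProjection_iff
    (T ∘L Td).range (Td ∘L T).range
  rwa [← hP, ← hQ, range_comp_eq_range_of_comp_comp_eq h1,
    range_comp_eq_range_adjoint_of_comp_comp_eq h1 h4] at key

theorem stmt4 (T Td : H →L[ℂ] H) (hT : IsClosed (LinearMap.range (T : H →ₗ[ℂ] H) : Set H))
    (h1 : T ∘L Td ∘L T = T) (h2 : Td ∘L T ∘L Td = Td)
    (h3 : IsSelfAdjoint (T ∘L Td)) (h4 : IsSelfAdjoint (Td ∘L T)) :
    IsClosed (LinearMap.range ((T ∘L Td - Td ∘L T : H →L[ℂ] H) : H →ₗ[ℂ] H) : Set H) ↔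
      IsClosed ((LinearMap.range (T : H →ₗ[ℂ] H) ⊔ LinearMap.range ((adjoint T : H →L[ℂ] H) : H →ₗ[ℂ] H) : Submodule ℂ H) : Set H) :=
  stmt4_general T Td h1 h3 h4
end

section
/- Let T be a bounded operator on a complex Hilbert space H with closed range such that T and T* coincide on R(T) ∩ R(T*). Then T maps R(T*) ⊖ (R(T) ∩ R(T*)) into R(T) ⊖ (R(T) ∩ R(T*)), and T maps (R(T) ∩ R(T*))^⊥ into (R(T) ∩ R(T*))^⊥. -/
/-!
On `M = R(T) ∩ R(T*)` the map `T*` agrees with `T`, so `T* m` lies in both ranges: `M` is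
`T*`-invariant, hence `Mᗮ` is `T`-invariant, and both inclusions follow.
-/

open ContinuousLinearMap

variable {H : Type*} [NormedAddCommGroup H] [InnerProductSpace ℂ H] [CompleteSpace H]

open Module End in
theorem ContinuousLinearMap.range_inf_range_adjoint_mem_invtSubmodule_adjoint
    {𝕜 E : Type*} [RCLike 𝕜] [NormedAddCommGroup E] [InnerProductSpace 𝕜 E] [CompleteSpace E]
    {T : E →L[𝕜] E} (hCoR : ∀ x ∈ T.range ⊓ (adjoint T).range, T x = adjoint T x) :
    T.range ⊓ (adjoint T).range ∈ invtSubmodule (adjoint T).toLinearMap := by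
  refine (mem_invtSubmodule_iff_forall_mem_of_mem _).mpr fun m hm ↦ ?_
  rw [coe_coe, ← hCoR m hm]
  exact ⟨⟨m, rfl⟩, hCoR m hm ▸ ⟨m, rfl⟩⟩

theorem stmt6_general (T : H →L[ℂ] H)
    (hCoR : ∀ x ∈ LinearMap.range (T : H →ₗ[ℂ] H) ⊓ LinearMap.range (adjoint T : H →ₗ[ℂ] H), T x = adjoint T x) :
    (let M := LinearMap.range (T : H →ₗ[ℂ] H) ⊓ LinearMap.range (adjoint T : H →ₗ[ℂ] H)
     (LinearMap.range (adjoint T : H →ₗ[ℂ] H) ⊓ Mᗮ).map (T : H →ₗ[ℂ] H) ≤ LinearMap.range (T : H →ₗ[ℂ] H) ⊓ Mᗮ ∧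
       Mᗮ.map (T : H →ₗ[ℂ] H) ≤ Mᗮ) := by
  intro M
  have hM : Mᗮ.map (T : H →ₗ[ℂ] H) ≤ Mᗮ :=
    (Module.End.mem_invtSubmodule_iff_map_le _).mp <|
      orthogonal_mem_invtSubmodule (range_inf_range_adjoint_mem_invtSubmodule_adjoint hCoR)
  exact ⟨le_inf LinearMap.map_le_range ((Submodule.map_mono inf_le_right).trans hM), hM⟩

theorem stmt6 (T : H →L[ℂ] H) (hT : IsClosed (LinearMap.range (T : H →ₗ[ℂ] H) : Set H))
    (hCoR : ∀ x ∈ LinearMap.range (T : H →ₗ[ℂ] H) ⊓ LinearMap.range (adjoint T : H →ₗ[ℂ] H), T x = adjoint T x) :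
    (let M := LinearMap.range (T : H →ₗ[ℂ] H) ⊓ LinearMap.range (adjoint T : H →ₗ[ℂ] H)
     (LinearMap.range (adjoint T : H →ₗ[ℂ] H) ⊓ Mᗮ).map (T : H →ₗ[ℂ] H) ≤ LinearMap.range (T : H →ₗ[ℂ] H) ⊓ Mᗮ ∧
       Mᗮ.map (T : H →ₗ[ℂ] H) ≤ Mᗮ) :=
  stmt6_general T hCoR
end

section
/- Let T ∈ B(H) be a CoR operator decomposed as T = [[A,B],[0,0]] with respect to H = closure(R(T)) ⊕ N(T*), and let P be the orthogonal projection in B(closure(R(T))) onto M := closure(R(T)) ∩ closure(R(T*)). Then PAP = AP = A*P = PA*P. -/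
/-!
On `M` the CoR condition gives `T m = T* m ∈ R(T) ∩ R(T*) ⊆ M`, so `M` is `T`-invariant. In
particular `T m ∈ closure R(T)`, so compressing to `closure R(T)` does not change `T m = T* m`:
both `A` and `A*` act on `M` as `T`. Hence `AP = A*P` and `R(P) = M` is `A`-invariant.
-/

open ContinuousLinearMap

variable {H : Type*} [NormedAddCommGroup H] [InnerProductSpace ℂ H] [CompleteSpace H]

omit [CompleteSpace H] in
theorem opB_apply_of_mem {T : H →L[ℂ] H} {K N : Submodule ℂ H} [CompleteSpace K] {x : N}
    (hx : T x ∈ K) : opB T K N x = ⟨T x, hx⟩ :=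
  K.orthogonalProjectionOnto_mem_subspace_eq_self ⟨T x, hx⟩

theorem adjoint_opB (T : H →L[ℂ] H) (K N : Submodule ℂ H) [CompleteSpace K] [CompleteSpace N] :
    adjoint (opB T K N) = opB (adjoint T) N K := by
  rw [opB, opB, adjoint_comp, adjoint_comp, K.adjoint_orthogonalProjectionOnto, N.adjoint_subtypeL,
    comp_assoc]

theorem apply_mem_closure_range_inf_closure_range_adjoint {𝕜 E : Type*} [RCLike 𝕜]
    [NormedAddCommGroup E] [InnerProductSpace 𝕜 E] [CompleteSpace E] {T : E →L[𝕜] E}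
    (hCoR : ∀ x ∈ (LinearMap.range (T : E →ₗ[𝕜] E)).topologicalClosure ⊓
        (LinearMap.range ((adjoint T : E →L[𝕜] E) : E →ₗ[𝕜] E)).topologicalClosure,
        T x = adjoint T x)
    {x : E} (hx : x ∈ (LinearMap.range (T : E →ₗ[𝕜] E)).topologicalClosure ⊓
        (LinearMap.range ((adjoint T : E →L[𝕜] E) : E →ₗ[𝕜] E)).topologicalClosure) :
    T x ∈ (LinearMap.range (T : E →ₗ[𝕜] E)).topologicalClosure ⊓
        (LinearMap.range ((adjoint T : E →L[𝕜] E) : E →ₗ[𝕜] E)).topologicalClosure :=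
  ⟨Submodule.le_topologicalClosure _ ⟨x, rfl⟩,
    hCoR x hx ▸ Submodule.le_topologicalClosure _ ⟨x, rfl⟩⟩

theorem stmt8 (T : H →L[ℂ] H)
    (hCoR : ∀ x ∈ (LinearMap.range (T : H →ₗ[ℂ] H)).topologicalClosure ⊓
        (LinearMap.range ((adjoint T : H →L[ℂ] H) : H →ₗ[ℂ] H)).topologicalClosure, T x = adjoint T x) :
    haveI : CompleteSpace (LinearMap.range (T : H →ₗ[ℂ] H)).topologicalClosure :=
      (LinearMap.range (T : H →ₗ[ℂ] H)).isClosed_topologicalClosure.completeSpace_coe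
    (let K := (LinearMap.range (T : H →ₗ[ℂ] H)).topologicalClosure
     let M := K ⊓ (LinearMap.range ((adjoint T : H →L[ℂ] H) : H →ₗ[ℂ] H)).topologicalClosure
     let A := opB T K K
     ∀ P : K →L[ℂ] K, IsIdempotentElem P → IsSelfAdjoint P →
       LinearMap.range (P : K →ₗ[ℂ] K) = M.comap (K.subtypeL : K →ₗ[ℂ] H) →
       P ∘L A ∘L P = A ∘L P ∧ A ∘L P = adjoint A ∘L P ∧
         adjoint A ∘L P = P ∘L adjoint A ∘L P) := by
  intro K M A P hP _ hPr
  have hTM : ∀ y : K, y ∈ LinearMap.range (P : K →ₗ[ℂ] K) → T y ∈ M := fun y hy ↦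
    apply_mem_closure_range_inf_closure_range_adjoint hCoR (by rwa [hPr] at hy)
  have hA : ∀ y ∈ LinearMap.range (P : K →ₗ[ℂ] K), (A y : H) = T y := fun y hy ↦
    congrArg Subtype.val (opB_apply_of_mem (hTM y hy).1)
  have hA_adjoint : ∀ y ∈ LinearMap.range (P : K →ₗ[ℂ] K), (adjoint A y : H) = T y := by
    intro y hy
    have hT_eq := hCoR y (by rwa [hPr] at hy)
    rw [adjoint_opB, opB_apply_of_mem (hT_eq ▸ (hTM y hy).1)]
    exact hT_eq.symm
  have hinv : LinearMap.range (P : K →ₗ[ℂ] K) ∈ Module.End.invtSubmodule (A : K →ₗ[ℂ] K) := by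
    refine (Module.End.mem_invtSubmodule_iff_forall_mem_of_mem _).mpr fun y hy ↦ ?_
    rw [hPr]
    show (A y : H) ∈ M
    exact hA y hy ▸ hTM y hy
  have hPAP : P ∘L A ∘L P = A ∘L P := hP.conj_eq_of_range_mem_invtSubmodule hinv
  have hAP : A ∘L P = adjoint A ∘L P :=
    ext fun x ↦ Subtype.ext <| (hA _ ⟨x, rfl⟩).trans (hA_adjoint _ ⟨x, rfl⟩).symm
  refine ⟨hPAP, hAP, ?_⟩
  rw [← hAP]
  exact hPAP.symm
end

section
/- Let T be a bounded operator on a complex Hilbert space H with closed range such that T and T* coincide on R(T) ∩ R(T*). Then R(T) + R(T*) is closed if and only if R(T + T*) is closed, and in that case R(T + T*) = R(T) + R(T*). -/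
/-!
Write `S = T + T†` and `K = R(T) + R(T†)`. For `m ∈ R(T) ∩ R(T†)` the CoR condition gives
`⟪m, T x⟫ = ⟪T† m, x⟫ = ⟪T m, x⟫ = ⟪m, T† x⟫`. Whenever `S x = T b + T† a`, the vector
`m = T x - T b = T† a - T† x` is of this kind, and the identity forces
`‖T x‖ + ‖T† x‖ ≤ 2 (‖T b‖ + ‖T† a‖)`.

Taking `a = b = 0` shows `ker S = ker T ∩ ker T† = K^⊥`; as `S` is self-adjoint, `R(S)` and `K`
have the same closure, so a closed `R(S)` is all of `K`. Conversely, if `K` is closed, the open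
mapping theorem for `(a, b) ↦ T b + T† a` gives such `a, b` of size `O(‖S x‖)`, and expanding
`‖x‖² = ⟪x, T b' + T† a'⟫` gives `‖x‖ ≤ C (‖T x‖ + ‖T† x‖)` on `K`. Hence `S` is bounded below
on `K = (ker S)^⊥`, and its range is closed.
-/

open ContinuousLinearMap
open scoped InnerProductSpace

section InnerProductSpace

variable {𝕜 E : Type*} [RCLike 𝕜] [NormedAddCommGroup E] [InnerProductSpace 𝕜 E]

theorem norm_add_norm_le_of_inner_sub_eq {u v p q : E} (h : u + v = p + q)
    (huv : ⟪u - p, u⟫_𝕜 = ⟪u - p, v⟫_𝕜) : ‖u‖ + ‖v‖ ≤ 2 * (‖p‖ + ‖q‖) := by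
  obtain ⟨m, rfl⟩ : ∃ m, u = m + p := ⟨u - p, by abel⟩
  obtain rfl : v = q - m := by rw [eq_sub_iff_add_eq]; linear_combination (norm := abel) h
  rw [add_sub_cancel_right, inner_add_right, inner_sub_right] at huv
  have hmm : (2 : 𝕜) * ⟪m, m⟫_𝕜 = ⟪m, q - p⟫_𝕜 := by
    rw [inner_sub_right]
    linear_combination huv
  have hsq : 2 * ‖m‖ ^ 2 ≤ ‖m‖ * (‖p‖ + ‖q‖) :=
    calc 2 * ‖m‖ ^ 2 = RCLike.re ⟪m, q - p⟫_𝕜 := by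
          rw [← hmm, RCLike.ofNat_mul_re, inner_self_eq_norm_sq]
      _ ≤ ‖m‖ * ‖q - p‖ := re_inner_le_norm m _
      _ ≤ ‖m‖ * (‖p‖ + ‖q‖) := by grw [norm_sub_le, add_comm]
  have hm : 2 * ‖m‖ ≤ ‖p‖ + ‖q‖ := by
    by_contra! hc
    nlinarith [norm_nonneg p, norm_nonneg q]
  calc ‖m + p‖ + ‖q - m‖ ≤ (‖m‖ + ‖p‖) + (‖q‖ + ‖m‖) :=
        add_le_add (norm_add_le m p) (norm_sub_le q m)
    _ ≤ 2 * (‖p‖ + ‖q‖) := by linarith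

end InnerProductSpace

namespace ContinuousLinearMap

section OpenMapping

variable {𝕜 E₁ E₂ F : Type*} [NontriviallyNormedField 𝕜]
  [NormedAddCommGroup E₁] [NormedSpace 𝕜 E₁] [CompleteSpace E₁]
  [NormedAddCommGroup E₂] [NormedSpace 𝕜 E₂] [CompleteSpace E₂]
  [NormedAddCommGroup F] [NormedSpace 𝕜 F] [CompleteSpace F]

theorem exists_preimage_norm_le_of_isClosed_sup_range (A : E₁ →L[𝕜] F) (B : E₂ →L[𝕜] F)
    (h : IsClosed ((A.range ⊔ B.range : Submodule 𝕜 F) : Set F)) :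
    ∃ C > 0, ∀ y ∈ A.range ⊔ B.range,
      ∃ a b, A a + B b = y ∧ ‖a‖ ≤ C * ‖y‖ ∧ ‖b‖ ≤ C * ‖y‖ := by
  set K := A.range ⊔ B.range
  have : CompleteSpace K := h.completeSpace_coe
  let AB : E₁ × E₂ →L[𝕜] K := (A.coprod B).codRestrict K fun ab ↦
    K.add_mem (Submodule.mem_sup_left ⟨ab.1, rfl⟩) (Submodule.mem_sup_right ⟨ab.2, rfl⟩)
  have hAB : Function.Surjective AB := by
    rintro ⟨y, hy⟩
    obtain ⟨_, ⟨a, rfl⟩, _, ⟨b, rfl⟩, rfl⟩ := Submodule.mem_sup.mp hy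
    exact ⟨(a, b), rfl⟩
  obtain ⟨C, hC, hpre⟩ := AB.exists_preimage_norm_le hAB
  refine ⟨C, hC, fun y hy ↦ ?_⟩
  obtain ⟨⟨a, b⟩, hab, hnorm⟩ := hpre ⟨y, hy⟩
  exact ⟨a, b, congrArg Subtype.val hab, (le_max_left _ _).trans hnorm,
    (le_max_right _ _).trans hnorm⟩

end OpenMapping

section InnerProductSpace

variable {𝕜 E₁ E₂ F : Type*} [RCLike 𝕜]
  [NormedAddCommGroup E₁] [InnerProductSpace 𝕜 E₁] [CompleteSpace E₁]
  [NormedAddCommGroup E₂] [InnerProductSpace 𝕜 E₂] [CompleteSpace E₂]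
  [NormedAddCommGroup F] [InnerProductSpace 𝕜 F] [CompleteSpace F]

theorem exists_norm_le_norm_adjoint_add_norm_adjoint (A : E₁ →L[𝕜] F) (B : E₂ →L[𝕜] F)
    (h : IsClosed ((A.range ⊔ B.range : Submodule 𝕜 F) : Set F)) :
    ∃ C > 0, ∀ y ∈ A.range ⊔ B.range, ‖y‖ ≤ C * (‖adjoint A y‖ + ‖adjoint B y‖) := by
  obtain ⟨C, hC, hpre⟩ := A.exists_preimage_norm_le_of_isClosed_sup_range B h
  refine ⟨C, hC, fun y hy ↦ ?_⟩
  obtain ⟨a, b, rfl, ha, hb⟩ := hpre y hy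
  set y := A a + B b
  have hsq : ‖y‖ ^ 2 ≤ ‖y‖ * (C * (‖adjoint A y‖ + ‖adjoint B y‖)) :=
    calc ‖y‖ ^ 2 = RCLike.re (⟪adjoint A y, a⟫_𝕜 + ⟪adjoint B y, b⟫_𝕜) := by
          rw [adjoint_inner_left, adjoint_inner_left, ← inner_add_right, inner_self_eq_norm_sq]
      _ ≤ ‖adjoint A y‖ * ‖a‖ + ‖adjoint B y‖ * ‖b‖ := by
          rw [map_add]; exact add_le_add (re_inner_le_norm _ _) (re_inner_le_norm _ _)
      _ ≤ ‖adjoint A y‖ * (C * ‖y‖) + ‖adjoint B y‖ * (C * ‖y‖) := by gcongr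
      _ = ‖y‖ * (C * (‖adjoint A y‖ + ‖adjoint B y‖)) := by ring
  by_contra! hc
  have hD : 0 ≤ C * (‖adjoint A y‖ + ‖adjoint B y‖) := by positivity
  nlinarith [mul_lt_mul_of_pos_left hc (hD.trans_lt hc)]

end InnerProductSpace

theorem isClosed_range_of_norm_le {𝕜 E F : Type*} [RCLike 𝕜]
    [NormedAddCommGroup E] [InnerProductSpace 𝕜 E] [NormedAddCommGroup F] [NormedSpace 𝕜 F]
    (S : E →L[𝕜] F) (K : Submodule 𝕜 E) [CompleteSpace K] (hK : Kᗮ ≤ S.ker) (C : ℝ)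
    (hC : ∀ x ∈ K, ‖x‖ ≤ C * ‖S x‖) : IsClosed (S.range : Set F) := by
  have hS : (S.range : Set F) = Set.range (S ∘L K.subtypeL) := by
    ext y
    constructor
    · rintro ⟨x, rfl⟩
      refine ⟨⟨K.starProjection x, K.starProjection_apply_mem x⟩, ?_⟩
      have h0 : S (x - K.starProjection x) = 0 := hK (K.sub_starProjection_mem_orthogonal x)
      rw [map_sub, sub_eq_zero] at h0
      exact h0.symm
    · rintro ⟨x, rfl⟩
      exact ⟨x, rfl⟩
  have hanti : AntilipschitzWith C.toNNReal (S ∘L K.subtypeL) :=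
    (S ∘L K.subtypeL).antilipschitz_of_bound fun x ↦
      (hC x x.2).trans (mul_le_mul_of_nonneg_right C.le_coe_toNNReal (norm_nonneg _))
  rw [hS]
  exact hanti.isClosed_range (S ∘L K.subtypeL).uniformContinuous

variable {𝕜 E : Type*} [RCLike 𝕜] [NormedAddCommGroup E] [InnerProductSpace 𝕜 E] [CompleteSpace E]

def IsCoR (T : E →L[𝕜] E) : Prop :=
  ∀ x ∈ T.range ⊓ (adjoint T).range, T x = adjoint T x

theorem range_add_adjoint_le (T : E →L[𝕜] E) :
    (T + adjoint T).range ≤ T.range ⊔ (adjoint T).range := by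
  rintro _ ⟨x, rfl⟩
  exact Submodule.add_mem_sup ⟨x, rfl⟩ ⟨x, rfl⟩

namespace IsCoR

variable {T : E →L[𝕜] E}

theorem norm_add_norm_adjoint_le (hT : T.IsCoR) {x a b : E}
    (h : T x + adjoint T x = T b + adjoint T a) :
    ‖T x‖ + ‖adjoint T x‖ ≤ 2 * (‖T b‖ + ‖adjoint T a‖) := by
  have hR : T x - T b ∈ T.range := ⟨x - b, map_sub T x b⟩
  have hR' : T x - T b ∈ (adjoint T).range := by
    refine ⟨a - x, ?_⟩
    rw [coe_coe, map_sub]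
    linear_combination (norm := abel) -h
  refine norm_add_norm_le_of_inner_sub_eq (𝕜 := 𝕜) h ?_
  calc ⟪T x - T b, T x⟫_𝕜 = ⟪adjoint T (T x - T b), x⟫_𝕜 := (adjoint_inner_left _ _ _).symm
    _ = ⟪T (T x - T b), x⟫_𝕜 := by rw [hT _ ⟨hR, hR'⟩]
    _ = ⟪T x - T b, adjoint T x⟫_𝕜 := (adjoint_inner_right _ _ _).symm

theorem ker_add_adjoint (hT : T.IsCoR) :
    (T + adjoint T).ker = (T.range ⊔ (adjoint T).range)ᗮ := by
  rw [← Submodule.inf_orthogonal, orthogonal_range, orthogonal_range, adjoint_adjoint]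
  refine le_antisymm (fun x hx ↦ ?_) fun x ⟨hx, hx'⟩ ↦ ?_
  · have h0 : T x + adjoint T x = T 0 + adjoint T 0 := by simpa using hx
    have h := hT.norm_add_norm_adjoint_le h0
    simp only [map_zero, norm_zero, add_zero, mul_zero] at h
    rw [Submodule.mem_inf, LinearMap.mem_ker, LinearMap.mem_ker, coe_coe, coe_coe,
      ← norm_le_zero_iff, ← norm_le_zero_iff]
    constructor <;> linarith [norm_nonneg (T x), norm_nonneg (adjoint T x)]
  · simp_all

theorem topologicalClosure_range_add_adjoint (hT : T.IsCoR) :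
    (T + adjoint T).range.topologicalClosure =
      (T.range ⊔ (adjoint T).range).topologicalClosure := by
  have hS : adjoint (T + adjoint T) = T + adjoint T := by
    rw [map_add, adjoint_adjoint, add_comm]
  rw [← Submodule.orthogonal_orthogonal_eq_closure, ← Submodule.orthogonal_orthogonal_eq_closure,
    orthogonal_range, hS, hT.ker_add_adjoint]

theorem range_add_adjoint_eq_of_isClosed (hT : T.IsCoR)
    (h : IsClosed ((T + adjoint T).range : Set E)) :
    (T + adjoint T).range = T.range ⊔ (adjoint T).range :=
  le_antisymm T.range_add_adjoint_le <| calc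
    _ ≤ (T.range ⊔ (adjoint T).range).topologicalClosure := Submodule.le_topologicalClosure _
    _ = (T + adjoint T).range.topologicalClosure := hT.topologicalClosure_range_add_adjoint.symm
    _ = _ := h.submodule_topologicalClosure_eq

theorem exists_norm_le_norm_add_adjoint_apply (hT : T.IsCoR)
    (hK : IsClosed ((T.range ⊔ (adjoint T).range : Submodule 𝕜 E) : Set E)) :
    ∃ C, ∀ x ∈ T.range ⊔ (adjoint T).range, ‖x‖ ≤ C * ‖(T + adjoint T) x‖ := by
  obtain ⟨C₁, hC₁, hpre⟩ := T.exists_preimage_norm_le_of_isClosed_sup_range (adjoint T) hK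
  obtain ⟨C₂, hC₂, hdual⟩ := T.exists_norm_le_norm_adjoint_add_norm_adjoint (adjoint T) hK
  rw [adjoint_adjoint] at hdual
  refine ⟨C₂ * (2 * (‖T‖ + ‖adjoint T‖) * C₁), fun x hx ↦ ?_⟩
  set s := ‖(T + adjoint T) x‖
  obtain ⟨b, a, hab, hb, ha⟩ := hpre _ (T.range_add_adjoint_le ⟨x, rfl⟩)
  calc ‖x‖ ≤ C₂ * (‖T x‖ + ‖adjoint T x‖) := (hdual x hx).trans_eq (by rw [add_comm])
    _ ≤ C₂ * (2 * (‖T‖ * ‖b‖ + ‖adjoint T‖ * ‖a‖)) := by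
        grw [hT.norm_add_norm_adjoint_le hab.symm, le_opNorm T b, le_opNorm (adjoint T) a]
    _ ≤ C₂ * (2 * (‖T‖ * (C₁ * s) + ‖adjoint T‖ * (C₁ * s))) := by
        gcongr; exacts [hb, ha]
    _ = C₂ * (2 * (‖T‖ + ‖adjoint T‖) * C₁) * s := by ring

theorem isClosed_range_add_adjoint (hT : T.IsCoR)
    (hK : IsClosed ((T.range ⊔ (adjoint T).range : Submodule 𝕜 E) : Set E)) :
    IsClosed ((T + adjoint T).range : Set E) := by
  have : CompleteSpace (T.range ⊔ (adjoint T).range : Submodule 𝕜 E) := hK.completeSpace_coe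
  obtain ⟨C, hC⟩ := hT.exists_norm_le_norm_add_adjoint_apply hK
  exact (T + adjoint T).isClosed_range_of_norm_le _ hT.ker_add_adjoint.ge C hC

end IsCoR

end ContinuousLinearMap

variable {H : Type*} [NormedAddCommGroup H] [InnerProductSpace ℂ H] [CompleteSpace H]

theorem stmt10_general (T : H →L[ℂ] H)
    (hCoR : ∀ x ∈ LinearMap.range (T : H →ₗ[ℂ] H) ⊓ LinearMap.range (adjoint T : H →ₗ[ℂ] H), T x = adjoint T x) :
    (IsClosed ((LinearMap.range (T : H →ₗ[ℂ] H) ⊔ LinearMap.range (adjoint T : H →ₗ[ℂ] H) : Submodule ℂ H) : Set H) ↔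
        IsClosed (LinearMap.range ((T + adjoint T : H →L[ℂ] H) : H →ₗ[ℂ] H) : Set H)) ∧
      (IsClosed (LinearMap.range ((T + adjoint T : H →L[ℂ] H) : H →ₗ[ℂ] H) : Set H) →
        LinearMap.range ((T + adjoint T : H →L[ℂ] H) : H →ₗ[ℂ] H) = LinearMap.range (T : H →ₗ[ℂ] H) ⊔ LinearMap.range (adjoint T : H →ₗ[ℂ] H)) := by
  have hT : T.IsCoR := hCoR
  refine ⟨⟨hT.isClosed_range_add_adjoint, fun h ↦ ?_⟩, hT.range_add_adjoint_eq_of_isClosed⟩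
  rw [← hT.range_add_adjoint_eq_of_isClosed h]
  exact h

theorem stmt10 (T : H →L[ℂ] H) (hT : IsClosed (LinearMap.range (T : H →ₗ[ℂ] H) : Set H))
    (hCoR : ∀ x ∈ LinearMap.range (T : H →ₗ[ℂ] H) ⊓ LinearMap.range (adjoint T : H →ₗ[ℂ] H), T x = adjoint T x) :
    (IsClosed ((LinearMap.range (T : H →ₗ[ℂ] H) ⊔ LinearMap.range (adjoint T : H →ₗ[ℂ] H) : Submodule ℂ H) : Set H) ↔
        IsClosed (LinearMap.range ((T + adjoint T : H →L[ℂ] H) : H →ₗ[ℂ] H) : Set H)) ∧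
      (IsClosed (LinearMap.range ((T + adjoint T : H →L[ℂ] H) : H →ₗ[ℂ] H) : Set H) →
        LinearMap.range ((T + adjoint T : H →L[ℂ] H) : H →ₗ[ℂ] H) = LinearMap.range (T : H →ₗ[ℂ] H) ⊔ LinearMap.range (adjoint T : H →ₗ[ℂ] H)) :=
  stmt10_general T hCoR
end

section
/- Let P and Q be orthogonal projections on a complex Hilbert space H, and let T = P₁P₂⋯P_k be any finite product where each P_i ∈ {P, Q}. Then T and T* coincide on closure(R(T)) ∩ closure(R(T*)), i.e., T is a CoR operator. -/
/-!
Since `P` and `Q` are idempotent, deleting repeated adjacent letters does not change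
`T = P₁ ⋯ P_k`, so `T` is the product of a word alternating between `P` and `Q`, and `T*` is the
product of the reversed word. Over a two-letter alphabet an alternating word is determined by its
first letter and its length, so a word that starts and ends with the same letter is a palindrome,
and then `T` is self-adjoint. Otherwise the word starts with one of `P`, `Q` and ends with the
other. The closure of `R(T)` lies in the closed range of the first letter and that of `R(T*)` in
the range of the last one, so every `x` in the intersection is fixed by `P` and `Q`, hence by `T`
and by `T*`.
-/

open ContinuousLinearMap

variable {H : Type*} [NormedAddCommGroup H] [InnerProductSpace ℂ H] [CompleteSpace H]

namespace List

theorem prod_destutter'_ne_of_isIdempotentElem {M : Type*} [Monoid M] [DecidableEq M] {a : M}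
    {l : List M} (ha : IsIdempotentElem a) (hl : ∀ b ∈ l, IsIdempotentElem b) :
    (l.destutter' (· ≠ ·) a).prod = a * l.prod := by
  induction l generalizing a with
  | nil => simp
  | cons b l ih =>
    have hb := hl b mem_cons_self
    have hl' := fun c hc => hl c (mem_cons_of_mem b hc)
    by_cases hab : a ≠ b
    · rw [destutter'_cons_pos _ hab, prod_cons, ih hb hl', prod_cons]
    · rw [destutter'_cons_neg _ hab, ih ha hl', prod_cons, not_not.1 hab, ← mul_assoc, hb.eq]

theorem prod_destutter_ne_of_isIdempotentElem {M : Type*} [Monoid M] [DecidableEq M]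
    {l : List M} (hl : ∀ a ∈ l, IsIdempotentElem a) : (l.destutter (· ≠ ·)).prod = l.prod := by
  cases l with
  | nil => rfl
  | cons a l =>
    rw [destutter_cons', prod_destutter'_ne_of_isIdempotentElem (hl a mem_cons_self)
      (fun b hb => hl b (mem_cons_of_mem a hb)), prod_cons]

theorem eq_of_isChain_ne_of_head?_eq {α : Type*} {p q : α} {l₁ l₂ : List α}
    (h₁ : ∀ a ∈ l₁, a = p ∨ a = q) (h₂ : ∀ a ∈ l₂, a = p ∨ a = q)
    (hc₁ : l₁.IsChain (· ≠ ·)) (hc₂ : l₂.IsChain (· ≠ ·))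
    (hhead : l₁.head? = l₂.head?) (hlen : l₁.length = l₂.length) : l₁ = l₂ := by
  induction l₁ generalizing l₂ with
  | nil => exact (length_eq_zero_iff.1 hlen.symm).symm
  | cons a t₁ ih =>
    obtain _ | ⟨b, t₂⟩ := l₂
    · simp at hlen
    obtain rfl : a = b := by simpa using hhead
    congr 1
    refine ih (fun c hc => h₁ c (mem_cons_of_mem a hc)) (fun c hc => h₂ c (mem_cons_of_mem a hc))
      hc₁.tail hc₂.tail ?_ (by simpa using hlen)
    obtain _ | ⟨c, t₁⟩ := t₁ <;> obtain _ | ⟨d, t₂⟩ := t₂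
    · rfl
    · simp at hlen
    · simp at hlen
    -- `c` and `d` both differ from `a` in the alphabet `{p, q}`
    have hac := (isChain_cons_cons.1 hc₁).1
    have had := (isChain_cons_cons.1 hc₂).1
    grind [h₁ a (by simp), h₁ c (by simp), h₂ d (by simp)]

theorem reverse_eq_self_of_isChain_ne {α : Type*} {p q : α} {l : List α}
    (hl : ∀ a ∈ l, a = p ∨ a = q) (hc : l.IsChain (· ≠ ·)) (hends : l.head? = l.getLast?) :
    l.reverse = l :=
  eq_of_isChain_ne_of_head?_eq (fun a ha => hl a (mem_reverse.1 ha)) hl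
    (isChain_reverse.2 (hc.imp fun _ _ h => h.symm)) hc (by rw [head?_reverse, hends])
    length_reverse

theorem star_prod_of_forall_isSelfAdjoint {R : Type*} [Monoid R] [StarMul R] {l : List R}
    (hl : ∀ a ∈ l, IsSelfAdjoint a) : star l.prod = l.reverse.prod := by
  induction l with
  | nil => simp
  | cons a l ih =>
    rw [prod_cons, star_mul, ih (fun b hb => hl b (mem_cons_of_mem a hb)),
      (hl a mem_cons_self).star_eq, reverse_cons, prod_append, prod_singleton]

end List

namespace ContinuousLinearMap

open List

variable {R M : Type*} [Ring R] [TopologicalSpace M] [AddCommGroup M] [Module R M]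

theorem list_prod_apply_eq_self {l : List (M →L[R] M)} {x : M} (h : ∀ A ∈ l, A x = x) :
    l.prod x = x := by
  induction l with
  | nil => rfl
  | cons A l ih =>
    rw [prod_cons, mul_apply_eq_comp, ih (fun B hB => h B (mem_cons_of_mem A hB)),
      h A mem_cons_self]

variable [IsTopologicalAddGroup M] [T1Space M] [ContinuousConstSMul R M]

theorem apply_eq_self_of_mem_closure_range_list_prod {l : List (M →L[R] M)} {A : M →L[R] M}
    (hhead : l.head? = some A) (hA : IsIdempotentElem A) {x : M}
    (hx : x ∈ (LinearMap.range (l.prod : M →ₗ[R] M)).topologicalClosure) : A x = x := by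
  obtain ⟨t, rfl⟩ : ∃ t, l = A :: t := by
    obtain _ | ⟨B, t⟩ := l
    · simp at hhead
    · exact ⟨t, by simpa using hhead⟩
  have hle : LinearMap.range ((A :: t).prod : M →ₗ[R] M) ≤ LinearMap.range (A : M →ₗ[R] M) := by
    rw [prod_cons, toLinearMap_mul]
    exact LinearMap.range_comp_le_range _ _
  exact (LinearMap.IsIdempotentElem.mem_range_iff hA.toLinearMap).1 <|
    Submodule.topologicalClosure_minimal _ hle hA.isClosed_range hx

theorem apply_eq_self_of_mem_closure_range_list_prod_of_head?_ne_getLast?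
    {p q : M →L[R] M} (hp : IsIdempotentElem p) (hq : IsIdempotentElem q)
    {l : List (M →L[R] M)} (hl : ∀ a ∈ l, a = p ∨ a = q) (hends : l.head? ≠ l.getLast?) {x : M}
    (hx : x ∈ (LinearMap.range (l.prod : M →ₗ[R] M)).topologicalClosure)
    (hx' : x ∈ (LinearMap.range (l.reverse.prod : M →ₗ[R] M)).topologicalClosure) :
    p x = x ∧ q x = x := by
  have hne : l ≠ [] := by rintro rfl; exact hends rfl
  have hidem : ∀ a ∈ l, IsIdempotentElem a := fun a ha => by
    rcases hl a ha with rfl | rfl <;> assumption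
  have hfirst := apply_eq_self_of_mem_closure_range_list_prod (head?_eq_some_head hne)
    (hidem _ (head_mem hne)) hx
  have hlast := apply_eq_self_of_mem_closure_range_list_prod
    (by rw [head?_reverse, getLast?_eq_some_getLast hne]) (hidem _ (getLast_mem hne)) hx'
  rw [head?_eq_some_head hne, getLast?_eq_some_getLast hne, ne_eq, Option.some.injEq] at hends
  rcases hl _ (head_mem hne) with h | h <;> rcases hl _ (getLast_mem hne) with h' | h' <;>
    simp_all

end ContinuousLinearMap

open List in
theorem stmt14_general (P Q : H →L[ℂ] H)
    (hP1 : IsIdempotentElem P) (hP2 : IsSelfAdjoint P)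
    (hQ1 : IsIdempotentElem Q) (hQ2 : IsSelfAdjoint Q)
    (l : List (H →L[ℂ] H)) (hmem : ∀ S ∈ l, S = P ∨ S = Q) :
    ∀ x ∈ (LinearMap.range (l.prod : H →ₗ[ℂ] H)).topologicalClosure ⊓
        (LinearMap.range (adjoint l.prod : H →ₗ[ℂ] H)).topologicalClosure,
      l.prod x = adjoint l.prod x := by
  classical
  have hletter : ∀ S ∈ l, IsIdempotentElem S ∧ IsSelfAdjoint S := fun S hS => by
    rcases hmem S hS with rfl | rfl <;> exact ⟨‹_›, ‹_›⟩
  set d := l.destutter (· ≠ ·)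
  have hsub : ∀ S ∈ d, S ∈ l := fun S hS => (destutter_sublist _ l).subset hS
  have hd : ∀ S ∈ d, S = P ∨ S = Q := fun S hS => hmem S (hsub S hS)
  have hprod : d.prod = l.prod := prod_destutter_ne_of_isIdempotentElem fun S hS => (hletter S hS).1
  have hadj : adjoint l.prod = d.reverse.prod := by
    rw [← hprod, ← star_eq_adjoint,
      star_prod_of_forall_isSelfAdjoint fun S hS => (hletter S (hsub S hS)).2]
  rintro x ⟨hxT, hxT'⟩
  rw [hadj] at hxT' ⊢
  rw [← hprod] at hxT ⊢
  by_cases hends : d.head? = d.getLast?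
  · rw [reverse_eq_self_of_isChain_ne hd (isChain_destutter _ _) hends]
  obtain ⟨hPx, hQx⟩ :=
    apply_eq_self_of_mem_closure_range_list_prod_of_head?_ne_getLast? hP1 hQ1 hd hends hxT hxT'
  have hfix : ∀ S ∈ d, S x = x := fun S hS => by rcases hd S hS with rfl | rfl <;> assumption
  rw [list_prod_apply_eq_self hfix, list_prod_apply_eq_self fun S hS => hfix S (mem_reverse.1 hS)]

theorem stmt14 (P Q : H →L[ℂ] H)
    (hP1 : IsIdempotentElem P) (hP2 : IsSelfAdjoint P)
    (hQ1 : IsIdempotentElem Q) (hQ2 : IsSelfAdjoint Q)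
    (l : List (H →L[ℂ] H)) (hl : l ≠ []) (hmem : ∀ S ∈ l, S = P ∨ S = Q) :
    ∀ x ∈ (LinearMap.range (l.prod : H →ₗ[ℂ] H)).topologicalClosure ⊓
        (LinearMap.range (adjoint l.prod : H →ₗ[ℂ] H)).topologicalClosure,
      l.prod x = adjoint l.prod x :=
  stmt14_general P Q hP1 hP2 hQ1 hQ2 l hmem
end

section
/- Let P and Q be orthogonal projections on a complex Hilbert space H and let T be an alternating product PQPQ⋯Q ending with Q (so T* = QP⋯P). Then closure(R(T)) ∩ closure(R(T*)) = R(P) ∩ R(Q), and both T and T* act as the identity on R(P) ∩ R(Q). -/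
/-!
`T = P(QPQ⋯Q)` and `T* = Q(PQP⋯P)`, so the ranges of `T` and `T*` lie in the closed ranges of
`P` and `Q`. Conversely, a vector fixed by both `P` and `Q` is fixed by every product of them,
so it lies in the ranges of `T` and `T*`.
-/

open ContinuousLinearMap

namespace ContinuousLinearMap

variable {R M : Type*}

theorem pow_mul_apply_eq_self [Semiring R] [TopologicalSpace M] [AddCommMonoid M] [Module R M]
    {p q : M →L[R] M} {x : M} (hp : p x = x) (hq : q x = x) (n : ℕ) :
    ((p * q) ^ n) x = x := by
  rw [FunLike.coe_pow_eq_iterate]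
  exact Function.IsFixedPt.iterate (Function.IsFixedPt.comp hp hq) n

theorem range_pow_mul_le [Semiring R] [TopologicalSpace M] [AddCommMonoid M] [Module R M]
    (p q : M →L[R] M) {n : ℕ} (hn : 0 < n) :
    LinearMap.range (((p * q) ^ n : M →L[R] M) : M →ₗ[R] M) ≤ LinearMap.range (p : M →ₗ[R] M) := by
  obtain ⟨k, rfl⟩ := Nat.exists_eq_add_of_lt hn
  rintro _ ⟨y, rfl⟩
  exact ⟨q (((p * q) ^ k) y), by rw [zero_add, pow_succ']; rfl⟩

theorem topologicalClosure_range_pow_mul_le [Ring R] [TopologicalSpace M] [T1Space M]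
    [AddCommGroup M] [IsTopologicalAddGroup M] [Module R M] [ContinuousConstSMul R M]
    {p : M →L[R] M} (hp : IsIdempotentElem p) (q : M →L[R] M) {n : ℕ} (hn : 0 < n) :
    (LinearMap.range (((p * q) ^ n : M →L[R] M) : M →ₗ[R] M)).topologicalClosure ≤
      LinearMap.range (p : M →ₗ[R] M) :=
  Submodule.topologicalClosure_minimal _ (range_pow_mul_le p q hn) hp.isClosed_range

end ContinuousLinearMap

variable {H : Type*} [NormedAddCommGroup H] [InnerProductSpace ℂ H] [CompleteSpace H]

theorem stmt15 (P Q : H →L[ℂ] H)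
    (hP1 : IsIdempotentElem P) (hP2 : IsSelfAdjoint P)
    (hQ1 : IsIdempotentElem Q) (hQ2 : IsSelfAdjoint Q)
    (n : ℕ) (hn : 1 ≤ n) :
    (let T := (P * Q) ^ n
     (LinearMap.range (T : H →ₗ[ℂ] H)).topologicalClosure ⊓
         (LinearMap.range ((adjoint T : H →L[ℂ] H) : H →ₗ[ℂ] H)).topologicalClosure =
       LinearMap.range (P : H →ₗ[ℂ] H) ⊓ LinearMap.range (Q : H →ₗ[ℂ] H) ∧
       ∀ x ∈ LinearMap.range (P : H →ₗ[ℂ] H) ⊓ LinearMap.range (Q : H →ₗ[ℂ] H), T x = x ∧ adjoint T x = x) := by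
  intro T
  have hT_adjoint : adjoint T = (Q * P) ^ n := by
    rw [← star_eq_adjoint, star_pow, star_mul, hP2.star_eq, hQ2.star_eq]
  have hfix : ∀ x ∈ LinearMap.range (P : H →ₗ[ℂ] H) ⊓ LinearMap.range (Q : H →ₗ[ℂ] H),
      T x = x ∧ adjoint T x = x := by
    rintro x ⟨hxP, hxQ⟩
    have hPx := (LinearMap.IsIdempotentElem.mem_range_iff hP1.toLinearMap).mp hxP
    have hQx := (LinearMap.IsIdempotentElem.mem_range_iff hQ1.toLinearMap).mp hxQ
    exact ⟨pow_mul_apply_eq_self hPx hQx n, hT_adjoint ▸ pow_mul_apply_eq_self hQx hPx n⟩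
  refine ⟨le_antisymm ?_ fun x hx => ?_, hfix⟩
  · exact inf_le_inf (topologicalClosure_range_pow_mul_le hP1 Q hn)
      (hT_adjoint ▸ topologicalClosure_range_pow_mul_le hQ1 P hn)
  · obtain ⟨hTx, hT_adjoint_x⟩ := hfix x hx
    exact ⟨Submodule.le_topologicalClosure _ ⟨x, hTx⟩,
      Submodule.le_topologicalClosure _ ⟨x, hT_adjoint_x⟩⟩
end

section
/- For any two orthogonal projections P and Q on a complex Hilbert space H, the product PQ is a CoR operator: PQ and its adjoint QP coincide on closure(R(PQ)) ∩ closure(R(QP)). -/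
open ContinuousLinearMap

variable {H : Type*} [NormedAddCommGroup H] [InnerProductSpace ℂ H] [CompleteSpace H]

theorem ContinuousLinearMap.IsIdempotentElem.topologicalClosure_range_mul_le_range
    {R M : Type*} [Ring R] [TopologicalSpace M] [AddCommGroup M] [Module R M]
    [IsTopologicalAddGroup M] [ContinuousConstSMul R M] [T1Space M]
    {p : M →L[R] M} (hp : IsIdempotentElem p) (q : M →L[R] M) :
    (LinearMap.range ((p * q : M →L[R] M) : M →ₗ[R] M)).topologicalClosure ≤
      LinearMap.range (p : M →ₗ[R] M) :=
  Submodule.topologicalClosure_minimal _ (LinearMap.range_comp_le_range _ _) hp.isClosed_range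

theorem stmt16_general (P Q : H →L[ℂ] H)
    (hP1 : IsIdempotentElem P)
    (hQ1 : IsIdempotentElem Q) :
    ∀ x ∈ (LinearMap.range ((P * Q : H →L[ℂ] H) : H →ₗ[ℂ] H)).topologicalClosure ⊓
        (LinearMap.range ((Q * P : H →L[ℂ] H) : H →ₗ[ℂ] H)).topologicalClosure,
      (P * Q) x = (Q * P) x := by
  rintro x ⟨hxPQ, hxQP⟩
  have hPx : P x = x := (LinearMap.IsIdempotentElem.mem_range_iff hP1.toLinearMap).mp
    (hP1.topologicalClosure_range_mul_le_range Q hxPQ)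
  have hQx : Q x = x := (LinearMap.IsIdempotentElem.mem_range_iff hQ1.toLinearMap).mp
    (hQ1.topologicalClosure_range_mul_le_range P hxQP)
  change P (Q x) = Q (P x)
  rw [hQx, hPx, hQx]

theorem stmt16 (P Q : H →L[ℂ] H)
    (hP1 : IsIdempotentElem P) (hP2 : IsSelfAdjoint P)
    (hQ1 : IsIdempotentElem Q) (hQ2 : IsSelfAdjoint Q) :
    ∀ x ∈ (LinearMap.range ((P * Q : H →L[ℂ] H) : H →ₗ[ℂ] H)).topologicalClosure ⊓
        (LinearMap.range ((Q * P : H →L[ℂ] H) : H →ₗ[ℂ] H)).topologicalClosure,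
      (P * Q) x = (Q * P) x :=
  stmt16_general P Q hP1 hQ1
end

section
/- There exist orthogonal projections P, Q, R on C⁴ such that T = PQR is not a CoR operator: specifically, with P the projection onto span(e₁,e₂), Q = [[1/2,0,0,1/2],[0,1,0,0],[0,0,0,0],[1/2,0,0,1/2]], and R = [[1,0,0,0],[0,3/4,0,√3/4],[0,0,1,0],[0,√3/4,0,1/4]], the vector x = (1,0,0,0) lies in R(T) ∩ R(T*) but Tx ≠ T*x. -/
/-!
Multiplying out, `T = PQR` has rows `(1/2, √3/8, 0, 1/8)` and `(0, 3/4, 0, √3/4)` followed by two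
zero rows. Hence `T (2e₁) = e₁` and `T* (2e₁ - (√3/3) e₂) = e₁`, while the second coordinates of
`T e₁` and `T* e₁` are `T₂₁ = 0` and `conj T₁₂ = √3/8`.
-/

open ContinuousLinearMap Matrix

noncomputable def P19 : Matrix (Fin 4) (Fin 4) ℂ :=
  !![1, 0, 0, 0; 0, 1, 0, 0; 0, 0, 0, 0; 0, 0, 0, 0]

noncomputable def Q19 : Matrix (Fin 4) (Fin 4) ℂ :=
  !![1/2, 0, 0, 1/2; 0, 1, 0, 0; 0, 0, 0, 0; 1/2, 0, 0, 1/2]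

noncomputable def R19 : Matrix (Fin 4) (Fin 4) ℂ :=
  !![1, 0, 0, 0;
     0, 3/4, 0, (Real.sqrt 3 : ℂ)/4;
     0, 0, 1, 0;
     0, (Real.sqrt 3 : ℂ)/4, 0, 1/4]


section EuclideanMatrix

variable {𝕜 n : Type*} [RCLike 𝕜] [Fintype n] [DecidableEq n]

lemma adjoint_toEuclideanCLM (A : Matrix n n 𝕜) :
    adjoint (toEuclideanCLM (𝕜 := 𝕜) A) = toEuclideanCLM (𝕜 := 𝕜) Aᴴ := by
  rw [← star_eq_conjTranspose, map_star, star_eq_adjoint]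

lemma toLp_mem_range_toEuclideanCLM {A : Matrix n n 𝕜} {v : n → 𝕜} (w : n → 𝕜)
    (h : A *ᵥ w = v) : WithLp.toLp 2 v ∈ LinearMap.range (toEuclideanCLM (𝕜 := 𝕜) A).toLinearMap :=
  ⟨WithLp.toLp 2 w, by simp [h]⟩

lemma toEuclideanCLM_single_one_apply (A : Matrix n n 𝕜) (i j : n) :
    toEuclideanCLM (𝕜 := 𝕜) A (EuclideanSpace.single j 1) i = A i j := by
  simp

end EuclideanMatrix

lemma sqrt_three_sq : (Real.sqrt 3 : ℂ) ^ 2 = 3 := by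
  norm_cast; exact Real.sq_sqrt (by norm_num)

lemma P19_isHermitian : P19.IsHermitian := by
  rw [IsHermitian.ext_iff]; simp [P19, Fin.forall_fin_succ]

lemma Q19_isHermitian : Q19.IsHermitian := by
  rw [IsHermitian.ext_iff]; simp [Q19, Fin.forall_fin_succ, map_ofNat]

lemma R19_isHermitian : R19.IsHermitian := by
  rw [IsHermitian.ext_iff]; simp [R19, Fin.forall_fin_succ, Complex.conj_ofReal, map_ofNat]

lemma isIdempotentElem_P19 : IsIdempotentElem P19 := by
  rw [IsIdempotentElem, ← Matrix.ext_iff]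
  simp [P19, Fin.forall_fin_succ, mul_apply, Fin.sum_univ_succ]

lemma isIdempotentElem_Q19 : IsIdempotentElem Q19 := by
  rw [IsIdempotentElem, ← Matrix.ext_iff]
  norm_num [Q19, Fin.forall_fin_succ, mul_apply, Fin.sum_univ_succ]

lemma isIdempotentElem_R19 : IsIdempotentElem R19 := by
  rw [IsIdempotentElem, ← Matrix.ext_iff]
  simp [R19, Fin.forall_fin_succ, mul_apply, Fin.sum_univ_succ]
  ring_nf; norm_num [sqrt_three_sq]

lemma P19_mul_Q19_mul_R19 : P19 * Q19 * R19 =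
    !![1/2, (Real.sqrt 3 : ℂ)/8, 0, 1/8;
       0, 3/4, 0, (Real.sqrt 3 : ℂ)/4;
       0, 0, 0, 0;
       0, 0, 0, 0] := by
  rw [← Matrix.ext_iff]
  simp [P19, Q19, R19, Fin.forall_fin_succ, mul_apply, Fin.sum_univ_succ]
  ring_nf; norm_num [sqrt_three_sq]

theorem stmt19 :
    P19ᴴ = P19 ∧ P19 * P19 = P19 ∧ Q19ᴴ = Q19 ∧ Q19 * Q19 = Q19 ∧
      R19ᴴ = R19 ∧ R19 * R19 = R19 ∧
      (let Tc := Matrix.toEuclideanCLM (𝕜 := ℂ) (P19 * Q19 * R19)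
       let x : EuclideanSpace ℂ (Fin 4) := EuclideanSpace.single 0 1
       x ∈ LinearMap.range Tc.toLinearMap ⊓ LinearMap.range (adjoint Tc).toLinearMap ∧ Tc x ≠ adjoint Tc x) := by
  refine ⟨P19_isHermitian, isIdempotentElem_P19, Q19_isHermitian, isIdempotentElem_Q19,
    R19_isHermitian, isIdempotentElem_R19, ?_⟩
  intro Tc x
  simp only [Tc, x, adjoint_toEuclideanCLM, P19_mul_Q19_mul_R19]
  refine ⟨⟨toLp_mem_range_toEuclideanCLM ![2, 0, 0, 0] ?_,
    toLp_mem_range_toEuclideanCLM ![2, -Real.sqrt 3 / 3, 0, 0] ?_⟩, fun h => ?_⟩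
  · ext i; fin_cases i <;> simp [mulVec, dotProduct, Fin.sum_univ_succ]
  · ext i; fin_cases i <;> simp [mulVec, dotProduct, Fin.sum_univ_succ, map_ofNat]
    · ring
    · linear_combination (-1 / 12 : ℂ) * sqrt_three_sq
  · have h₁ := congrArg (· 1) h
    simp only [toEuclideanCLM_single_one_apply] at h₁
    norm_num [eq_comm (a := (0 : ℂ))] at h₁
end
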